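/- Suppose Ω ⊂ Ω̃ ⊂ ℝ² are domains and there exists a bounded linear extension operator E_Ω : L^{1,2}_A(Ω) → L^{1,2}_A(Ω̃) with (E_Ω u)|_Ω = u and norm ‖E_Ω‖. Then the first non-trivial Neumann eigenvalues satisfy μ₁(A, Ω) ≥ μ₁(A, Ω̃)/‖E_Ω‖². -/

import Mathlib

/-! Extend a mean-zero `u` on `Ω` and subtract from `E_Ω u` its mean over `Ω̃` (`Ω'` below).
Since a mean-zero function minimises `‖u - c‖_{L²(Ω)}` over constants `c`, the L² norm can only
grow, while the Dirichlet energy grows at most by the factor `‖E_Ω‖²`. So every Rayleigh quotient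
on `Ω`, times `‖E_Ω‖²`, dominates a Rayleigh quotient on `Ω̃`. -/

open MeasureTheory

noncomputable section

abbrev Plane := EuclideanSpace ℝ (Fin 2)

/-- The weighted Dirichlet seminorm `‖u | L^{1,2}_A(Ω)‖ = (∬_Ω ⟨A∇u,∇u⟩)^{1/2}`. -/
def dirichletSeminorm (A : Plane → (Plane →ₗ[ℝ] Plane)) (Ω : Set Plane)
    (u : Plane → ℝ) : ℝ :=
  Real.sqrt (∫ z in Ω, (inner ℝ (A z (gradient u z)) (gradient u z) : ℝ))

/-- The `L²(Ω)` norm. -/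
def l2NormOn (Ω : Set Plane) (u : Plane → ℝ) : ℝ :=
  Real.sqrt (∫ z in Ω, (u z) ^ 2)

/-- The Sobolev class `W^{1,2}(Ω)`: differentiable on `Ω`, with `u` and `∇u` in `L²(Ω)`. -/
def sobolevClass (Ω : Set Plane) : Set (Plane → ℝ) :=
  {u | DifferentiableOn ℝ u Ω ∧ IntegrableOn (fun z => (u z) ^ 2) Ω ∧
       IntegrableOn (fun z => ‖gradient u z‖ ^ 2) Ω}

/-- Admissible constants for the Poincaré inequality
`inf_c ‖u - c‖_{L²(Ω)} ≤ B ‖u | L^{1,2}_A(Ω)‖`. -/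
def poincareConstSet (A : Plane → (Plane →ₗ[ℝ] Plane)) (Ω : Set Plane) : Set ℝ :=
  {B | 0 ≤ B ∧ ∀ u ∈ sobolevClass Ω,
    (⨅ c : ℝ, l2NormOn Ω (fun z => u z - c)) ≤ B * dirichletSeminorm A Ω u}

/-- The best Poincaré constant `B_{2,2}(A,Ω)`. -/
def bestPoincare (A : Plane → (Plane →ₗ[ℝ] Plane)) (Ω : Set Plane) : ℝ :=
  sInf (poincareConstSet A Ω)

/-- The set of Rayleigh quotients over nonzero mean-zero Sobolev functions. -/
def rayleighSet (A : Plane → (Plane →ₗ[ℝ] Plane)) (Ω : Set Plane) : Set ℝ :=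
  {r | ∃ u ∈ sobolevClass Ω, (∫ z in Ω, u z) = 0 ∧ l2NormOn Ω u ≠ 0 ∧
       r = (dirichletSeminorm A Ω u) ^ 2 / (l2NormOn Ω u) ^ 2}

/-- The first non-trivial Neumann eigenvalue `μ₁(A,Ω)`, via the Min-Max principle. -/
def neumannEig (A : Plane → (Plane →ₗ[ℝ] Plane)) (Ω : Set Plane) : ℝ :=
  sInf (rayleighSet A Ω)

/-- The identity matrix field (corresponding to the Laplacian). -/
def idField : Plane → (Plane →ₗ[ℝ] Plane) := fun _ => LinearMap.id

section MeanZero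

variable {α : Type*} [MeasurableSpace α] {μ : Measure α} [IsFiniteMeasure μ] {u : α → ℝ}

theorem integral_sq_le_integral_sq_sub_const (hu : MemLp u 2 μ) (hmean : ∫ x, u x ∂μ = 0)
    (c : ℝ) : ∫ x, u x ^ 2 ∂μ ≤ ∫ x, (u x - c) ^ 2 ∂μ := by
  have hu1 : Integrable u μ := hu.integrable one_le_two
  have hexpand : ∫ x, (u x - c) ^ 2 ∂μ = ∫ x, u x ^ 2 ∂μ + μ.real Set.univ * c ^ 2 := by
    have hsq : (fun x => (u x - c) ^ 2) = fun x => u x ^ 2 - 2 * c * u x + c ^ 2 := by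
      funext x; ring
    have hlin : Integrable (fun x => u x ^ 2 - 2 * c * u x) μ :=
      hu.integrable_sq.sub (hu1.const_mul _)
    rw [hsq, integral_add hlin (integrable_const _),
      integral_sub hu.integrable_sq (hu1.const_mul _), integral_const_mul, hmean,
      integral_const, smul_eq_mul]
    ring
  rw [hexpand]
  exact le_add_of_nonneg_right (by positivity)

end MeanZero

theorem EuclideanSpace.volume_setOf_apply_eq {ι : Type*} [Fintype ι] (i : ι) (c : ℝ) :
    volume {z : EuclideanSpace ℝ ι | z i = c} = 0 := by
  change volume (WithLp.ofLp ⁻¹' {f : ι → ℝ | f i = c}) = 0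
  rw [(PiLp.volume_preserving_ofLp ι).measure_preimage
    (measurableSet_eq_fun (measurable_pi_apply i) measurable_const).nullMeasurableSet,
    volume_pi]
  exact Measure.pi_hyperplane (α := fun _ => ℝ) (fun _ => volume) i c

theorem gradient_sub_const {F : Type*} [NormedAddCommGroup F] [InnerProductSpace ℝ F]
    [CompleteSpace F] (u : F → ℝ) (c : ℝ) (z : F) :
    gradient (fun y => u y - c) z = gradient u z := by
  simp only [gradient, fderiv_sub_const]

theorem dirichletSeminorm_sub_const (A : Plane → (Plane →ₗ[ℝ] Plane)) (Ω : Set Plane)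
    (u : Plane → ℝ) (c : ℝ) :
    dirichletSeminorm A Ω (fun z => u z - c) = dirichletSeminorm A Ω u := by
  simp only [dirichletSeminorm, gradient_sub_const]

section SobolevClass

variable {Ω : Set Plane} {u : Plane → ℝ}

theorem memLp_of_mem_sobolevClass (hΩ : MeasurableSet Ω) (hu : u ∈ sobolevClass Ω) :
    MemLp u 2 (volume.restrict Ω) :=
  (memLp_two_iff_integrable_sq (hu.1.continuousOn.aestronglyMeasurable hΩ)).2 hu.2.1

theorem sub_const_mem_sobolevClass (hΩ : MeasurableSet Ω) (hfin : volume Ω ≠ ⊤)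
    (hu : u ∈ sobolevClass Ω) (c : ℝ) : (fun z => u z - c) ∈ sobolevClass Ω := by
  have := isFiniteMeasure_restrict.2 hfin
  refine ⟨hu.1.sub_const c,
    ((memLp_of_mem_sobolevClass hΩ hu).sub (memLp_const c)).integrable_sq, ?_⟩
  simpa only [gradient_sub_const] using hu.2.2

theorem mem_sobolevClass_of_contDiff (hΩ : Bornology.IsBounded Ω) (hu : ContDiff ℝ 1 u) :
    u ∈ sobolevClass Ω := by
  have hint {f : Plane → ℝ} (hf : Continuous f) : IntegrableOn f Ω :=
    (hf.continuousOn.integrableOn_compact hΩ.isCompact_closure).mono_set subset_closure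
  refine ⟨hu.differentiable one_ne_zero |>.differentiableOn, hint (hu.continuous.pow 2), hint ?_⟩
  exact (((InnerProductSpace.toDual ℝ Plane).symm.continuous.comp
    (hu.continuous_fderiv one_ne_zero)).norm.pow 2)

end SobolevClass

theorem l2NormOn_ne_zero {Ω : Set Plane} {u : Plane → ℝ} (h0 : volume Ω ≠ 0)
    (hnull : volume {z | u z = 0} = 0) (hu : IntegrableOn (fun z => u z ^ 2) Ω) :
    l2NormOn Ω u ≠ 0 := by
  intro hzero
  have hint : ∫ z in Ω, u z ^ 2 = 0 :=
    le_antisymm (Real.sqrt_eq_zero'.1 hzero) (integral_nonneg fun z => sq_nonneg (u z))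
  have hae_zero : ∀ᵐ z ∂volume.restrict Ω, u z = 0 := by
    filter_upwards [(integral_eq_zero_iff_of_nonneg (fun z => sq_nonneg (u z)) hu).1 hint]
      with z hz
    exact (pow_eq_zero_iff two_ne_zero).1 hz
  have hae_ne : ∀ᵐ z ∂volume.restrict Ω, u z ≠ 0 :=
    ae_restrict_of_ae (measure_eq_zero_iff_ae_notMem.1 hnull)
  have : (ae (volume.restrict Ω)).NeBot := by
    rw [ae_neBot, Ne, Measure.restrict_eq_zero]; exact h0
  obtain ⟨z, hz, hz'⟩ := (hae_zero.and hae_ne).exists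
  exact hz' hz

theorem rayleighSet_nonempty (A : Plane → (Plane →ₗ[ℝ] Plane)) {Ω : Set Plane}
    (hΩ : IsOpen Ω) (hne : Ω.Nonempty) (hbdd : Bornology.IsBounded Ω) :
    (rayleighSet A Ω).Nonempty := by
  set c := ⨍ z in Ω, z 0
  set u : Plane → ℝ := fun z => z 0 - c
  have hu : u ∈ sobolevClass Ω :=
    mem_sobolevClass_of_contDiff hbdd ((contDiff_piLp_apply 2).sub contDiff_const)
  have hnull : volume {z | u z = 0} = 0 := by
    simpa only [u, sub_eq_zero] using EuclideanSpace.volume_setOf_apply_eq 0 c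
  exact ⟨_, u, hu, setAverage_sub_setAverage hbdd.measure_lt_top.ne _,
    l2NormOn_ne_zero (hΩ.measure_pos volume hne).ne' hnull hu.2.1, rfl⟩

theorem bddBelow_rayleighSet (A : Plane → (Plane →ₗ[ℝ] Plane)) (Ω : Set Plane) :
    BddBelow (rayleighSet A Ω) := by
  refine ⟨0, ?_⟩
  rintro r ⟨u, -, -, -, rfl⟩
  positivity

theorem l2NormOn_le_l2NormOn_sub_const {Ω Ω' : Set Plane} (hsub : Ω ⊆ Ω')
    (hΩ : MeasurableSet Ω) (hfin : volume Ω ≠ ⊤) {u w : Plane → ℝ} (hu : u ∈ sobolevClass Ω)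
    (hmean : ∫ z in Ω, u z = 0) (hext : Set.EqOn w u Ω) (c : ℝ)
    (hw : IntegrableOn (fun z => (w z - c) ^ 2) Ω') :
    l2NormOn Ω u ≤ l2NormOn Ω' (fun z => w z - c) := by
  have := isFiniteMeasure_restrict.2 hfin
  refine Real.sqrt_le_sqrt ?_
  calc ∫ z in Ω, u z ^ 2
      ≤ ∫ z in Ω, (u z - c) ^ 2 :=
        integral_sq_le_integral_sq_sub_const (memLp_of_mem_sobolevClass hΩ hu) hmean c
    _ = ∫ z in Ω, (w z - c) ^ 2 := setIntegral_congr_fun hΩ fun z hz => by rw [hext hz]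
    _ ≤ ∫ z in Ω', (w z - c) ^ 2 :=
        setIntegral_mono_set hw (.of_forall fun z => sq_nonneg _) hsub.eventuallyLE

theorem exists_mem_rayleighSet_le_of_eqOn (A : Plane → (Plane →ₗ[ℝ] Plane)) {Ω Ω' : Set Plane}
    (hsub : Ω ⊆ Ω') (hΩ : MeasurableSet Ω) (hΩ' : MeasurableSet Ω') (hfin : volume Ω' ≠ ⊤)
    {u w : Plane → ℝ} {N : ℝ} (hu : u ∈ sobolevClass Ω) (hmean : ∫ z in Ω, u z = 0)
    (hl2 : l2NormOn Ω u ≠ 0) (hw : w ∈ sobolevClass Ω') (hext : Set.EqOn w u Ω)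
    (hD : dirichletSeminorm A Ω' w ≤ N * dirichletSeminorm A Ω u) :
    ∃ r ∈ rayleighSet A Ω',
      r ≤ N ^ 2 * (dirichletSeminorm A Ω u ^ 2 / l2NormOn Ω u ^ 2) := by
  set v : Plane → ℝ := fun z => w z - ⨍ y in Ω', w y
  have hv : v ∈ sobolevClass Ω' := sub_const_mem_sobolevClass hΩ' hfin hw _
  have hle : l2NormOn Ω u ≤ l2NormOn Ω' v :=
    l2NormOn_le_l2NormOn_sub_const hsub hΩ (measure_ne_top_of_subset hsub hfin) hu hmean hext _
      hv.2.1
  have hpos : 0 < l2NormOn Ω u := (Real.sqrt_nonneg _).lt_of_ne' hl2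
  refine ⟨_, ⟨v, hv, setAverage_sub_setAverage hfin w, (hpos.trans_le hle).ne', rfl⟩, ?_⟩
  have hDw : 0 ≤ dirichletSeminorm A Ω' w := Real.sqrt_nonneg _
  rw [dirichletSeminorm_sub_const]
  calc dirichletSeminorm A Ω' w ^ 2 / l2NormOn Ω' v ^ 2
      ≤ dirichletSeminorm A Ω' w ^ 2 / l2NormOn Ω u ^ 2 := by gcongr
    _ ≤ (N * dirichletSeminorm A Ω u) ^ 2 / l2NormOn Ω u ^ 2 := by gcongr
    _ = N ^ 2 * (dirichletSeminorm A Ω u ^ 2 / l2NormOn Ω u ^ 2) := by ring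

theorem stmt7_general (Ω Ω' : Set Plane) (hsub : Ω ⊆ Ω')
    (hΩopen : IsOpen Ω) (hΩconn : IsConnected Ω)
    (hΩ'open : IsOpen Ω') (hΩ'bdd : Bornology.IsBounded Ω')
    (A : Plane → (Plane →ₗ[ℝ] Plane))
    (Ext : (Plane → ℝ) → (Plane → ℝ))
    (hrestrict : ∀ u ∈ sobolevClass Ω, ∀ z ∈ Ω, Ext u z = u z)
    (N : ℝ) (hN : 0 < N)
    (hbdd : ∀ u ∈ sobolevClass Ω, Ext u ∈ sobolevClass Ω' ∧
      dirichletSeminorm A Ω' (Ext u) ≤ N * dirichletSeminorm A Ω u) :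
    neumannEig A Ω ≥ neumannEig A Ω' / N ^ 2 := by
  refine le_csInf (rayleighSet_nonempty A hΩopen hΩconn.nonempty (hΩ'bdd.subset hsub)) ?_
  rintro _ ⟨u, hu, hmean, hl2, rfl⟩
  obtain ⟨r, hr, hle⟩ := exists_mem_rayleighSet_le_of_eqOn A hsub hΩopen.measurableSet
    hΩ'open.measurableSet hΩ'bdd.measure_lt_top.ne hu hmean hl2 (hbdd u hu).1
    (hrestrict u hu) (hbdd u hu).2
  rw [div_le_iff₀' (by positivity)]
  exact (csInf_le (bddBelow_rayleighSet A Ω') hr).trans hle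

/-- Theorem C: If `Ω ⊂ Ω̃` and there is a bounded linear extension operator
`E_Ω : L^{1,2}_A(Ω) → L^{1,2}_A(Ω̃)` of norm `‖E_Ω‖`, then
`μ₁(A,Ω) ≥ μ₁(A,Ω̃)/‖E_Ω‖²`. -/
theorem stmt7 (Ω Ω' : Set Plane) (hsub : Ω ⊆ Ω')
    (hΩopen : IsOpen Ω) (hΩconn : IsConnected Ω) (hΩbdd : Bornology.IsBounded Ω)
    (hΩ'open : IsOpen Ω') (hΩ'conn : IsConnected Ω') (hΩ'bdd : Bornology.IsBounded Ω')
    (K : ℝ) (hK : 1 ≤ K) (A : Plane → (Plane →ₗ[ℝ] Plane))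
    (hell : ∀ᵐ z ∂(volume.restrict Ω'), ∀ ξ : Plane,
      (1 / K) * ‖ξ‖ ^ 2 ≤ inner ℝ (A z ξ) ξ ∧ (inner ℝ (A z ξ) ξ : ℝ) ≤ K * ‖ξ‖ ^ 2)
    (Ext : (Plane → ℝ) → (Plane → ℝ)) (hlin : IsLinearMap ℝ Ext)
    (hrestrict : ∀ u ∈ sobolevClass Ω, ∀ z ∈ Ω, Ext u z = u z)
    (N : ℝ) (hN : 0 < N)
    (hbdd : ∀ u ∈ sobolevClass Ω, Ext u ∈ sobolevClass Ω' ∧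
      dirichletSeminorm A Ω' (Ext u) ≤ N * dirichletSeminorm A Ω u) :
    neumannEig A Ω ≥ neumannEig A Ω' / N ^ 2 :=
  stmt7_general Ω Ω' hsub hΩopen hΩconn hΩ'open hΩ'bdd A Ext hrestrict N hN hbdd
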